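/- arXiv:2505.06190 — 2 statements merged into one kernel-verified Lean document; each statement's English description precedes it below -/
import Mathlib

section
/- Let (x_i)_{i≥1} be nonnegative random variables with partial sums s_n = Σ_{i=1}^n x_i, and suppose s_n/(n log n) → c in probability for some constant c > 0. Define for t > 0 the counting variable n(t) = max{k ≥ 1 : s_k ≤ t} (set n(t) = 0 if s_1 > t). Then n(t)·(log t)/t → 1/c in probability as t → ∞. -/
open MeasureTheory ProbabilityTheory Filter Real
open scoped Topology

private lemma aux_log_div_self : Tendsto (fun t : ℝ => Real.log t / t) atTop (𝓝 0) := by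
  have := Real.tendsto_pow_log_div_mul_add_atTop 1 0 1 one_ne_zero
  simpa using this

private lemma aux_div_log : Tendsto (fun t : ℝ => t / Real.log t) atTop atTop := by
  have h : Tendsto (fun t : ℝ => Real.log t / t) atTop (𝓝[>] 0) := by
    rw [tendsto_nhdsWithin_iff]
    refine ⟨aux_log_div_self, ?_⟩
    filter_upwards [eventually_gt_atTop (1 : ℝ)] with t ht
    exact div_pos (Real.log_pos ht) (lt_trans one_pos ht)
  have := h.inv_tendsto_nhdsGT_zero
  refine this.congr' ?_
  filter_upwards [eventually_gt_atTop (1 : ℝ)] with t ht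
  simp [Pi.inv_apply, inv_div]

private lemma aux_loglog : Tendsto (fun t : ℝ => Real.log (Real.log t) / Real.log t)
    atTop (𝓝 0) :=
  aux_log_div_self.comp Real.tendsto_log_atTop

/-- Core deterministic lemma: if `g t` is sandwiched between `a t / log t` and
`a t / log t + 1`, then `g t * log (g t) / t → a` and `g → ∞`. -/
private lemma aux_core (a : ℝ) (ha : 0 < a) (g : ℝ → ℕ)
    (hg : ∀ᶠ t in atTop, a * t / Real.log t ≤ (g t : ℝ) ∧ (g t : ℝ) ≤ a * t / Real.log t + 1) :
    Tendsto (fun t => (g t : ℝ) * Real.log (g t) / t) atTop (𝓝 a) ∧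
      Tendsto g atTop atTop := by
  set φ : ℝ → ℝ := fun t => a * t / Real.log t with hφdef
  have hφtop : Tendsto φ atTop atTop := by
    have : Tendsto (fun t : ℝ => a * (t / Real.log t)) atTop atTop :=
      Tendsto.const_mul_atTop ha aux_div_log
    refine this.congr fun t => by simp [hφdef, mul_div_assoc]
  have hφpos : ∀ᶠ t in atTop, 0 < φ t := hφtop.eventually (eventually_gt_atTop 0)
  have hgR : Tendsto (fun t => (g t : ℝ)) atTop atTop := by
    refine tendsto_atTop_mono' _ ?_ hφtop
    filter_upwards [hg] with t ht using ht.1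
  have hgN : Tendsto g atTop atTop := tendsto_natCast_atTop_iff.mp hgR
  -- ratio g / φ → 1
  have hratio : Tendsto (fun t => (g t : ℝ) / φ t) atTop (𝓝 1) := by
    have hup : Tendsto (fun t => 1 + 1 / φ t) atTop (𝓝 1) := by
      have := hφtop.inv_tendsto_atTop
      have h2 : Tendsto (fun t => 1 + (φ t)⁻¹) atTop (𝓝 (1 + 0)) :=
        tendsto_const_nhds.add this
      simpa [one_div] using h2
    refine tendsto_of_tendsto_of_tendsto_of_le_of_le' tendsto_const_nhds hup ?_ ?_
    · filter_upwards [hg, hφpos] with t ht hpos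
      exact (one_le_div hpos).mpr ht.1
    · filter_upwards [hg, hφpos] with t ht hpos
      rw [div_le_iff₀ hpos]
      have he : (1 + 1 / φ t) * φ t = φ t + 1 := by field_simp
      linarith [ht.2]
  -- log g / log t → 1
  have hlogratio : Tendsto (fun t => Real.log (g t) / Real.log t) atTop (𝓝 1) := by
    have hlow : Tendsto (fun t => (Real.log a + Real.log t - Real.log (Real.log t)) / Real.log t)
        atTop (𝓝 1) := by
      have h1 : Tendsto (fun t : ℝ => Real.log a / Real.log t) atTop (𝓝 0) := by
        simpa [div_eq_mul_inv] using
          (Real.tendsto_log_atTop.inv_tendsto_atTop).const_mul (Real.log a)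
      have h3 : Tendsto (fun t : ℝ => Real.log a / Real.log t + 1
          - Real.log (Real.log t) / Real.log t) atTop (𝓝 (0 + 1 - 0)) :=
        (h1.add tendsto_const_nhds).sub aux_loglog
      rw [zero_add, sub_zero] at h3
      refine h3.congr' ?_
      filter_upwards [eventually_gt_atTop (Real.exp 1)] with t ht
      have hlt : 0 < Real.log t := by
        have := Real.log_lt_log (Real.exp_pos 1) ht
        simp at this; linarith
      field_simp
    have hhigh : Tendsto (fun t =>
        (Real.log 2 + (Real.log a + Real.log t - Real.log (Real.log t))) / Real.log t)
        atTop (𝓝 1) := by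
      have h1 : Tendsto (fun t : ℝ => Real.log 2 / Real.log t) atTop (𝓝 0) := by
        simpa [div_eq_mul_inv] using
          (Real.tendsto_log_atTop.inv_tendsto_atTop).const_mul (Real.log 2)
      have := h1.add hlow
      rw [zero_add] at this
      refine this.congr ?_
      intro t
      rw [← add_div]
    refine tendsto_of_tendsto_of_tendsto_of_le_of_le' hlow hhigh ?_ ?_
    · filter_upwards [hg, hφpos, eventually_gt_atTop (Real.exp 1), hφtop.eventually
        (eventually_ge_atTop (1:ℝ))] with t ht hpos het hφ1
      have hlt : 0 < Real.log t := by
        have := Real.log_lt_log (Real.exp_pos 1) het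
        simp at this; linarith
      have htpos : (0:ℝ) < t := lt_trans (Real.exp_pos 1) het
      have hlogφ : Real.log (φ t) = Real.log a + Real.log t - Real.log (Real.log t) := by
        simp only [hφdef]
        rw [Real.log_div (ne_of_gt (mul_pos ha htpos)) (ne_of_gt hlt), Real.log_mul (ne_of_gt ha)
          (ne_of_gt htpos)]
      rw [div_le_div_iff_of_pos_right hlt, ← hlogφ]
      exact Real.log_le_log hpos ht.1
    · filter_upwards [hg, hφpos, eventually_gt_atTop (Real.exp 1), hφtop.eventually
        (eventually_ge_atTop (1:ℝ))] with t ht hpos het hφ1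
      have hlt : 0 < Real.log t := by
        have := Real.log_lt_log (Real.exp_pos 1) het
        simp at this; linarith
      have htpos : (0:ℝ) < t := lt_trans (Real.exp_pos 1) het
      have hlogφ : Real.log (φ t) = Real.log a + Real.log t - Real.log (Real.log t) := by
        simp only [hφdef]
        rw [Real.log_div (ne_of_gt (mul_pos ha htpos)) (ne_of_gt hlt), Real.log_mul (ne_of_gt ha)
          (ne_of_gt htpos)]
      rw [div_le_div_iff_of_pos_right hlt, ← hlogφ, ← Real.log_mul two_ne_zero
        (ne_of_gt hpos)]
      refine Real.log_le_log (lt_of_lt_of_le hpos ht.1) ?_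
      have := ht.2
      nlinarith
  -- combine
  constructor
  · have hmul : Tendsto (fun t => ((g t : ℝ) / φ t) * (Real.log (g t) / Real.log t) * a)
        atTop (𝓝 a) := by
      have := (hratio.mul hlogratio).mul_const a
      simpa using this
    refine hmul.congr' ?_
    filter_upwards [eventually_gt_atTop (Real.exp 1)] with t het
    have hlt : 0 < Real.log t := by
      have := Real.log_lt_log (Real.exp_pos 1) het
      simp at this; linarith
    have htpos : (0:ℝ) < t := lt_trans (Real.exp_pos 1) het
    rw [hφdef]
    field_simp
  · exact hgN

/-- Renewal-type inversion: if the partial sums `s_n = Σ_{i=1}^n x_i` of nonnegative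
random variables satisfy `s_n/(n log n) → c` in probability (c > 0), and
`N(t) = max{k ≥ 1 : s_k ≤ t}` (with `N(t) = 0` if `s_1 > t`), then
`N(t)·log t / t → 1/c` in probability as `t → ∞`. -/
theorem counting_process_inversion {Ω : Type*} [MeasureSpace Ω]
    [IsProbabilityMeasure (ℙ : Measure Ω)]
    (x : ℕ → Ω → ℝ) (hmeas : ∀ i, Measurable (x i)) (hnonneg : ∀ i ω, 0 ≤ x i ω)
    (c : ℝ) (hc : 0 < c)
    (hLLN : TendstoInMeasure ℙ
      (fun n : ℕ => fun ω => (∑ i ∈ Finset.Icc 1 n, x i ω) / ((n : ℝ) * Real.log n))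
      atTop (fun _ => c))
    (N : ℝ → Ω → ℕ)
    (hNmeas : ∀ t, Measurable (N t))
    (hN_le : ∀ t ω, 0 ≤ t → ∑ i ∈ Finset.Icc 1 (N t ω), x i ω ≤ t)
    (hN_max : ∀ t ω (k : ℕ), 0 ≤ t → (∑ i ∈ Finset.Icc 1 k, x i ω) ≤ t → k ≤ N t ω) :
    TendstoInMeasure ℙ
      (fun t : ℝ => fun ω => (N t ω : ℝ) * Real.log t / t)
      atTop (fun _ => 1 / c) := by
  rw [tendstoInMeasure_iff_dist] at hLLN ⊢
  intro ε hε
  set ε' : ℝ := min ε (1 / (2 * c)) with hε'def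
  have hε' : 0 < ε' := lt_min hε (by positivity)
  have hε'le : ε' ≤ ε := min_le_left _ _
  set a : ℝ := 1 / c + ε' with hadef
  set b : ℝ := 1 / c - ε' with hbdef
  have ha : 0 < a := by positivity
  have hb : 0 < b := by
    have : ε' ≤ 1 / (2 * c) := min_le_right _ _
    have h2 : 1 / (2 * c) < 1 / c := by
      rw [div_lt_div_iff₀ (by positivity) hc]; linarith
    rw [hbdef]; linarith
  have h1a : 1 / a < c := by
    rw [div_lt_iff₀ ha, hadef]
    have : 1 / c * c = 1 := by field_simp
    nlinarith
  have h1b : c < 1 / b := by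
    rw [lt_div_iff₀ hb, hbdef]
    have : 1 / c * c = 1 := by field_simp
    nlinarith
  set δ : ℝ := min ((c - 1 / a) / 2) ((1 / b - c) / 2) with hδdef
  have hδ : 0 < δ := lt_min (by linarith) (by linarith)
  set K : ℝ → ℕ := fun t => ⌈a * t / Real.log t⌉₊ with hKdef
  set M : ℝ → ℕ := fun t => ⌊b * t / Real.log t⌋₊ + 1 with hMdef
  have hsand : ∀ (d : ℝ), 0 < d → ∀ᶠ t in atTop,
      0 ≤ d * t / Real.log t ∧ 0 < Real.log t := by
    intro d hd
    filter_upwards [eventually_gt_atTop (1:ℝ)] with t ht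
    have hlt : 0 < Real.log t := Real.log_pos ht
    exact ⟨by positivity, hlt⟩
  have hKcore := aux_core a ha K (by
    filter_upwards [hsand a ha] with t ⟨h0, _⟩
    exact ⟨Nat.le_ceil _, le_of_lt (Nat.ceil_lt_add_one h0)⟩)
  have hMcore := aux_core b hb M (by
    filter_upwards [hsand b hb] with t ⟨h0, _⟩
    constructor
    · show b * t / Real.log t ≤ ((⌊b * t / Real.log t⌋₊ + 1 : ℕ) : ℝ)
      push_cast
      exact (Nat.lt_floor_add_one _).le
    · show ((⌊b * t / Real.log t⌋₊ + 1 : ℕ) : ℝ) ≤ b * t / Real.log t + 1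
      push_cast
      have := Nat.floor_le h0
      linarith)
  obtain ⟨hKlim, hKtop⟩ := hKcore
  obtain ⟨hMlim, hMtop⟩ := hMcore
  -- inverted limits
  have hKinv : Tendsto (fun t => t / ((K t : ℝ) * Real.log (K t))) atTop (𝓝 (1 / a)) := by
    have := hKlim.inv₀ (ne_of_gt ha)
    rw [one_div]
    refine this.congr fun t => ?_
    rw [inv_div]
  have hMinv : Tendsto (fun t => t / ((M t : ℝ) * Real.log (M t))) atTop (𝓝 (1 / b)) := by
    have := hMlim.inv₀ (ne_of_gt hb)
    rw [one_div]
    refine this.congr fun t => ?_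
    rw [inv_div]
  have hKev : ∀ᶠ t in atTop, t / ((K t : ℝ) * Real.log (K t)) ≤ c - δ := by
    refine hKinv.eventually_le_const ?_
    have : δ ≤ (c - 1/a)/2 := min_le_left _ _
    linarith
  have hMev : ∀ᶠ t in atTop, c + δ ≤ t / ((M t : ℝ) * Real.log (M t)) := by
    refine hMinv.eventually_const_le ?_
    have : δ ≤ (1/b - c)/2 := min_le_right _ _
    linarith
  have hPA : Tendsto (fun t => ℙ {ω | δ ≤ dist
      ((∑ i ∈ Finset.Icc 1 (K t), x i ω) / ((K t : ℝ) * Real.log (K t))) c})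
      atTop (𝓝 0) := (hLLN δ hδ).comp hKtop
  have hPB : Tendsto (fun t => ℙ {ω | δ ≤ dist
      ((∑ i ∈ Finset.Icc 1 (M t), x i ω) / ((M t : ℝ) * Real.log (M t))) c})
      atTop (𝓝 0) := (hLLN δ hδ).comp hMtop
  have hsum := hPA.add hPB
  rw [add_zero] at hsum
  refine tendsto_of_tendsto_of_tendsto_of_le_of_le' tendsto_const_nhds hsum
    (Eventually.of_forall fun t => zero_le) ?_
  filter_upwards [eventually_gt_atTop (1:ℝ), hKtop.eventually (eventually_ge_atTop 2),
    hMtop.eventually (eventually_ge_atTop 2), hKev, hMev] with t ht hK2 hM2 hKe hMe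
  have hlt : 0 < Real.log t := Real.log_pos ht
  have htpos : (0:ℝ) < t := lt_trans one_pos ht
  have hKR : (1:ℝ) < (K t : ℝ) := by exact_mod_cast lt_of_lt_of_le one_lt_two hK2
  have hMR : (1:ℝ) < (M t : ℝ) := by exact_mod_cast lt_of_lt_of_le one_lt_two hM2
  have hKd : 0 < (K t : ℝ) * Real.log (K t) :=
    mul_pos (lt_trans one_pos hKR) (Real.log_pos hKR)
  have hMd : 0 < (M t : ℝ) * Real.log (M t) :=
    mul_pos (lt_trans one_pos hMR) (Real.log_pos hMR)
  refine le_trans (measure_mono ?_) (measure_union_le _ _)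
  intro ω hω
  simp only [Set.mem_union, Set.mem_setOf_eq, Real.dist_eq] at hω ⊢
  rcases le_abs.mp hω with hup | hdown
  · -- upper deviation: N is large
    left
    have hNge : a ≤ (N t ω : ℝ) * Real.log t / t := by
      have : 1 / c + ε ≤ (N t ω : ℝ) * Real.log t / t := by linarith
      rw [hadef]; linarith
    have hKN : K t ≤ N t ω := by
      rw [hKdef]
      apply Nat.ceil_le.mpr
      rw [div_le_iff₀ hlt]
      calc a * t ≤ ((N t ω : ℝ) * Real.log t / t) * t := by
            nlinarith
        _ = (N t ω : ℝ) * Real.log t := by field_simp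
    have hsle : (∑ i ∈ Finset.Icc 1 (K t), x i ω) ≤ t := by
      refine le_trans ?_ (hN_le t ω (le_of_lt htpos))
      refine Finset.sum_le_sum_of_subset_of_nonneg ?_ (fun i _ _ => hnonneg i ω)
      exact Finset.Icc_subset_Icc_right hKN
    have : (∑ i ∈ Finset.Icc 1 (K t), x i ω) / ((K t : ℝ) * Real.log (K t)) ≤ c - δ :=
      le_trans ((div_le_div_iff_of_pos_right hKd).mpr hsle) hKe
    rw [le_abs]
    right
    linarith
  · -- lower deviation: N is small
    right
    have hNle : (N t ω : ℝ) * Real.log t / t ≤ b := by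
      rw [hbdef]; linarith
    have hNM : N t ω < M t := by
      have hcast : (N t ω : ℝ) < (M t : ℝ) := by
        have h1 : (N t ω : ℝ) ≤ b * t / Real.log t := by
          rw [le_div_iff₀ hlt]
          calc (N t ω : ℝ) * Real.log t = ((N t ω : ℝ) * Real.log t / t) * t := by
                field_simp
            _ ≤ b * t := by nlinarith
        have h2 : b * t / Real.log t < (M t : ℝ) := by
          rw [hMdef]; push_cast
          exact Nat.lt_floor_add_one _
        linarith
      exact_mod_cast hcast
    have hsgt : t < ∑ i ∈ Finset.Icc 1 (M t), x i ω := by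
      by_contra h
      push_neg at h
      exact absurd (hN_max t ω (M t) (le_of_lt htpos) h) (Nat.not_le.mpr hNM)
    have : c + δ ≤ (∑ i ∈ Finset.Icc 1 (M t), x i ω) / ((M t : ℝ) * Real.log (M t)) :=
      le_trans hMe ((div_le_div_iff_of_pos_right hMd).mpr (le_of_lt hsgt))
    rw [le_abs]
    left
    linarith
end

section
/- Let ψ be a positive random variable with P(ψ > x) ~ c x^{−1} (c > 0) as x → ∞, and let ε be a positive random variable independent of ψ with E[ε^{1+δ}] < ∞ for some δ > 0. Then x = ψε satisfies P(x > z) ~ c·E[ε]·z^{−1} as z → ∞. -/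
open MeasureTheory ProbabilityTheory Filter

/-- Breiman's lemma for tail index 1: if ψ > 0 has tail `P(ψ > x) ~ c x⁻¹` (c > 0)
and ε > 0 is independent of ψ with `E[ε^{1+δ}] < ∞` for some `δ > 0`, then the
product `x = ψε` satisfies `P(ψε > z) ~ c·E[ε]·z⁻¹` as `z → ∞`. -/
theorem breiman_tail_index_one {Ω : Type*} [MeasureSpace Ω]
    [IsProbabilityMeasure (ℙ : Measure Ω)]
    (ψ ε : Ω → ℝ) (hψmeas : Measurable ψ) (hεmeas : Measurable ε)
    (hψpos : ∀ ω, 0 < ψ ω) (hεpos : ∀ ω, 0 < ε ω)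
    (hindep : IndepFun ψ ε ℙ)
    (c : ℝ) (hc : 0 < c)
    (htail : Tendsto (fun x : ℝ => (ℙ {ω | ψ ω > x}).toReal / (c * x⁻¹)) atTop (nhds 1))
    (hεmom : ∃ δ : ℝ, 0 < δ ∧ Integrable (fun ω => ε ω ^ ((1 : ℝ) + δ))) :
    Tendsto
      (fun z : ℝ =>
        (ℙ {ω | ψ ω * ε ω > z}).toReal / (c * (∫ ω, ε ω) * z⁻¹))
      atTop (nhds 1) := by
  classical
  obtain ⟨δ, hδ, hεint'⟩ := hεmom
  -- ε is integrable
  have hεint : Integrable ε ℙ := by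
    refine Integrable.mono ((integrable_const (1 : ℝ)).add hεint')
      hεmeas.aestronglyMeasurable (Eventually.of_forall fun ω => ?_)
    simp only [Pi.add_apply]
    have h1 : (0 : ℝ) < ε ω := hεpos ω
    have h5 : (0 : ℝ) ≤ ε ω ^ ((1 : ℝ) + δ) := Real.rpow_nonneg h1.le _
    have h2 : ε ω ≤ 1 + ε ω ^ ((1 : ℝ) + δ) := by
      rcases le_or_gt (ε ω) 1 with h | h
      · linarith
      · calc ε ω = ε ω ^ (1 : ℝ) := (Real.rpow_one _).symm
          _ ≤ ε ω ^ ((1 : ℝ) + δ) :=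
              Real.rpow_le_rpow_of_exponent_le h.le (by linarith)
          _ ≤ 1 + ε ω ^ ((1 : ℝ) + δ) := (le_add_iff_nonneg_left _).2 zero_le_one
    rw [Real.norm_eq_abs, Real.norm_eq_abs, abs_of_pos h1, abs_of_nonneg (by linarith)]
    exact h2
  -- E[ε] > 0
  have hEpos : 0 < ∫ ω, ε ω := by
    rw [integral_pos_iff_support_of_nonneg (fun ω => (hεpos ω).le) hεint]
    have : Function.support ε = Set.univ := by
      ext ω; simp [Function.mem_support, (hεpos ω).ne']
    rw [this]
    simp
  -- the tail function
  set T : ℝ → ENNReal := fun t => ℙ {ω | ψ ω > t} with hT_def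
  have hT_anti : Antitone T := fun s t hst =>
    measure_mono fun ω h => lt_of_le_of_lt hst h
  have hTmeas : Measurable T := hT_anti.measurable
  have hTle : ∀ t, (T t).toReal ≤ 1 := by
    intro t
    have h1 : T t ≤ 1 := prob_le_one
    calc (T t).toReal ≤ (1 : ENNReal).toReal := ENNReal.toReal_mono (by simp) h1
      _ = 1 := by simp
  -- h x := x * P(ψ > x).toReal tends to c
  have hh : Tendsto (fun x : ℝ => x * (T x).toReal) atTop (nhds c) := by
    have h1 : Tendsto (fun x : ℝ => (T x).toReal / (c * x⁻¹) * c) atTop (nhds (1 * c)) :=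
      htail.mul_const c
    rw [one_mul] at h1
    refine h1.congr' ?_
    filter_upwards [eventually_gt_atTop (0 : ℝ)] with x hx
    field_simp
  -- key identity: P(ψε > z) = ∫⁻ T (z / ε ω)
  have hkey : ∀ z : ℝ, ℙ {ω | ψ ω * ε ω > z} = ∫⁻ ω, T (z / ε ω) ∂ℙ := by
    intro z
    have hmap : Measure.map (fun ω => (ψ ω, ε ω)) ℙ =
        (Measure.map ψ ℙ).prod (Measure.map ε ℙ) :=
      (indepFun_iff_map_prod_eq_prod_map_map hψmeas.aemeasurable hεmeas.aemeasurable).1 hindep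
    have hS : MeasurableSet {p : ℝ × ℝ | p.1 * p.2 > z} :=
      measurableSet_lt measurable_const (measurable_fst.mul measurable_snd)
    have step1 : ℙ {ω | ψ ω * ε ω > z} =
        Measure.map (fun ω => (ψ ω, ε ω)) ℙ {p : ℝ × ℝ | p.1 * p.2 > z} := by
      rw [Measure.map_apply (hψmeas.prodMk hεmeas) hS]
      rfl
    rw [step1, hmap, Measure.prod_apply_symm hS,
      lintegral_map (measurable_measure_prodMk_right hS) hεmeas]
    refine lintegral_congr fun ω => ?_
    have hslice : ((fun x => (x, ε ω)) ⁻¹' {p : ℝ × ℝ | p.1 * p.2 > z}) =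
        Set.Ioi (z / ε ω) := by
      ext x
      simp only [Set.mem_preimage, Set.mem_setOf_eq, Set.mem_Ioi, gt_iff_lt]
      exact (div_lt_iff₀ (hεpos ω)).symm
    rw [hslice, Measure.map_apply hψmeas measurableSet_Ioi]
    rfl
  -- toReal version
  have hFmeas : ∀ z : ℝ, Measurable fun ω => (T (z / ε ω)).toReal := fun z =>
    (hTmeas.comp (measurable_const.div hεmeas)).ennreal_toReal
  have hkeyR : ∀ z : ℝ, (ℙ {ω | ψ ω * ε ω > z}).toReal =
      ∫ ω, (T (z / ε ω)).toReal ∂ℙ := by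
    intro z
    rw [hkey z]
    exact (integral_toReal ((hTmeas.comp (measurable_const.div hεmeas)).aemeasurable)
      (Eventually.of_forall fun ω => measure_lt_top _ _)).symm
  -- dominated convergence
  obtain ⟨x₀, hx₀⟩ := (eventually_atTop).1 (hh.eventually_lt_const (lt_add_one c))
  set x₁ : ℝ := max x₀ 1 with hx₁_def
  have hx₁pos : (0 : ℝ) < x₁ := lt_of_lt_of_le one_pos (le_max_right _ _)
  set M : ℝ := max (c + 1) x₁ with hM_def
  set G : ℝ → Ω → ℝ := fun z ω => z * (T (z / ε ω)).toReal with hG_def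
  have hGid : ∀ z : ℝ, ∀ ω, G z ω = ε ω * ((z / ε ω) * (T (z / ε ω)).toReal) := by
    intro z ω
    have : ε ω * (z / ε ω) = z := mul_div_cancel₀ z (hεpos ω).ne'
    rw [hG_def]
    simp only
    rw [← mul_assoc, this]
  have hDCT : Tendsto (fun z => ∫ ω, G z ω ∂ℙ) atTop (nhds (∫ ω, c * ε ω ∂ℙ)) := by
    refine tendsto_integral_filter_of_dominated_convergence (fun ω => M * ε ω)
      (Eventually.of_forall fun z => ((hFmeas z).const_mul z).aestronglyMeasurable)
      ?_ (hεint.const_mul M) ?_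
    · -- uniform bound for z ≥ x₁
      filter_upwards [eventually_ge_atTop x₁] with z hz
      refine Eventually.of_forall fun ω => ?_
      have hzpos : 0 < z := lt_of_lt_of_le hx₁pos hz
      have hTnn : 0 ≤ (T (z / ε ω)).toReal := ENNReal.toReal_nonneg
      have hGnn : 0 ≤ G z ω := mul_nonneg hzpos.le hTnn
      rw [Real.norm_eq_abs, abs_of_nonneg hGnn]
      rcases le_or_gt x₀ (z / ε ω) with h | h
      · have hb : (z / ε ω) * (T (z / ε ω)).toReal ≤ c + 1 := (hx₀ _ h).le
        calc G z ω = ε ω * ((z / ε ω) * (T (z / ε ω)).toReal) := hGid z ω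
          _ ≤ ε ω * (c + 1) := by
              refine mul_le_mul_of_nonneg_left hb (hεpos ω).le
          _ ≤ ε ω * M := mul_le_mul_of_nonneg_left (le_max_left _ _) (hεpos ω).le
          _ = M * ε ω := mul_comm _ _
      · have h2 : z / ε ω < x₁ := lt_of_lt_of_le h (le_max_left _ _)
        have h3 : z < x₁ * ε ω := (div_lt_iff₀ (hεpos ω)).1 h2
        calc G z ω = z * (T (z / ε ω)).toReal := rfl
          _ ≤ z * 1 := mul_le_mul_of_nonneg_left (hTle _) hzpos.le
          _ = z := mul_one z
          _ ≤ x₁ * ε ω := h3.le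
          _ ≤ M * ε ω := mul_le_mul_of_nonneg_right (le_max_right _ _) (hεpos ω).le
    · -- pointwise convergence
      refine Eventually.of_forall fun ω => ?_
      have h1 : Tendsto (fun z : ℝ => z / ε ω) atTop atTop :=
        tendsto_id.atTop_div_const (hεpos ω)
      have h2 : Tendsto (fun z : ℝ => (z / ε ω) * (T (z / ε ω)).toReal) atTop (nhds c) :=
        hh.comp h1
      have h3 : Tendsto (fun z : ℝ => ε ω * ((z / ε ω) * (T (z / ε ω)).toReal)) atTop
          (nhds (ε ω * c)) := h2.const_mul (ε ω)
      have h4 : ε ω * c = c * ε ω := mul_comm _ _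
      rw [h4] at h3
      exact h3.congr fun z => (hGid z ω).symm
  rw [integral_const_mul] at hDCT
  set D : ℝ := c * ∫ ω, ε ω with hD_def
  have hDpos : 0 < D := mul_pos hc hEpos
  have hfin : Tendsto (fun z => (∫ ω, G z ω ∂ℙ) / D) atTop (nhds 1) := by
    have := hDCT.div_const D
    rwa [div_self hDpos.ne'] at this
  refine hfin.congr' ?_
  filter_upwards [eventually_gt_atTop (0 : ℝ)] with z hz
  have h1 : ∫ ω, G z ω ∂ℙ = z * ∫ ω, (T (z / ε ω)).toReal ∂ℙ := integral_const_mul z _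
  rw [h1, hkeyR z, hD_def]
  rw [div_eq_div_iff (mul_pos hc hEpos).ne' (by positivity)]
  field_simp
end
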